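/- arXiv:1103.1072 — 10 statements merged into one kernel-verified Lean document; each statement's English description precedes it below -/
import Mathlib

section
/- A 4×4 real antisymmetric matrix A is a wedge product, i.e., A = u vᵀ - v uᵀ for some u, v ∈ ℝ⁴, if and only if det A = 0. -/
/-!
The determinant of an alternating `4 × 4` matrix is the square of its Pfaffian
`A₀₁A₂₃ - A₀₂A₁₃ + A₀₃A₁₂`, which vanishes identically on wedges `u ∧ v`. Conversely, a vanishing
Pfaffian is the Plücker relation, which amounts to `A i j • A = A i ∧ A j` for any two rows;
so a nonzero entry `A i j` exhibits `A` as `(A i j)⁻¹ • A i ∧ A j`.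
-/

open Matrix

namespace Matrix

variable {R K : Type*} [CommRing R] [Field K]

def pfaffianFin4 (A : Matrix (Fin 4) (Fin 4) R) : R :=
  A 0 1 * A 2 3 - A 0 2 * A 1 3 + A 0 3 * A 1 2

theorem det_fin_four (A : Matrix (Fin 4) (Fin 4) R) :
    A.det =
      A 0 0 * A 1 1 * A 2 2 * A 3 3 - A 0 0 * A 1 1 * A 2 3 * A 3 2 -
        A 0 0 * A 1 2 * A 2 1 * A 3 3 + A 0 0 * A 1 2 * A 2 3 * A 3 1 +
        A 0 0 * A 1 3 * A 2 1 * A 3 2 - A 0 0 * A 1 3 * A 2 2 * A 3 1 -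
        A 0 1 * A 1 0 * A 2 2 * A 3 3 + A 0 1 * A 1 0 * A 2 3 * A 3 2 +
        A 0 1 * A 1 2 * A 2 0 * A 3 3 - A 0 1 * A 1 2 * A 2 3 * A 3 0 -
        A 0 1 * A 1 3 * A 2 0 * A 3 2 + A 0 1 * A 1 3 * A 2 2 * A 3 0 +
        A 0 2 * A 1 0 * A 2 1 * A 3 3 - A 0 2 * A 1 0 * A 2 3 * A 3 1 -
        A 0 2 * A 1 1 * A 2 0 * A 3 3 + A 0 2 * A 1 1 * A 2 3 * A 3 0 +
        A 0 2 * A 1 3 * A 2 0 * A 3 1 - A 0 2 * A 1 3 * A 2 1 * A 3 0 -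
        A 0 3 * A 1 0 * A 2 1 * A 3 2 + A 0 3 * A 1 0 * A 2 2 * A 3 1 +
        A 0 3 * A 1 1 * A 2 0 * A 3 2 - A 0 3 * A 1 1 * A 2 2 * A 3 0 -
        A 0 3 * A 1 2 * A 2 0 * A 3 1 + A 0 3 * A 1 2 * A 2 1 * A 3 0 := by
  rw [det_succ_row_zero, Fin.sum_univ_four]
  simp only [det_fin_three, submatrix_apply, Fin.succAbove, Fin.isValue, Fin.reduceSucc,
    Fin.reduceCastSucc, Fin.reduceLT, ↓reduceIte, Fin.coe_ofNat_eq_mod]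
  ring

section Alternating

variable {A : Matrix (Fin 4) (Fin 4) R} (hA : ∀ i j, A j i = -A i j) (hdiag : ∀ i, A i i = 0)
include hA hdiag

theorem det_eq_pfaffianFin4_sq : A.det = pfaffianFin4 A ^ 2 := by
  rw [det_fin_four, pfaffianFin4, hA 0 1, hA 0 2, hA 0 3, hA 1 2, hA 1 3, hA 2 3,
    hdiag 0, hdiag 1, hdiag 2, hdiag 3]
  ring

theorem smul_eq_vecMulVec_sub_of_pfaffianFin4_eq_zero (hpf : pfaffianFin4 A = 0) (i j : Fin 4) :
    A i j • A = vecMulVec (A i) (A j) - vecMulVec (A j) (A i) := by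
  unfold pfaffianFin4 at hpf
  ext k l
  simp only [smul_apply, sub_apply, vecMulVec_apply, smul_eq_mul]
  fin_cases i <;> fin_cases j <;> fin_cases k <;> fin_cases l <;>
    simp only [Fin.zero_eta, Fin.mk_one, Fin.reduceFinMk, hdiag,
      hA 0 1, hA 0 2, hA 0 3, hA 1 2, hA 1 3, hA 2 3] <;>
    first
      | ring1
      | linear_combination hpf
      | linear_combination -hpf

end Alternating

theorem pfaffianFin4_vecMulVec_sub (u v : Fin 4 → R) :
    pfaffianFin4 (vecMulVec u v - vecMulVec v u) = 0 := by
  simp only [pfaffianFin4, sub_apply, vecMulVec_apply]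
  ring

theorem exists_eq_vecMulVec_sub_of_pfaffianFin4_eq_zero {A : Matrix (Fin 4) (Fin 4) K}
    (hA : ∀ i j, A j i = -A i j) (hdiag : ∀ i, A i i = 0) (hpf : pfaffianFin4 A = 0) :
    ∃ u v : Fin 4 → K, A = vecMulVec u v - vecMulVec v u := by
  by_cases hzero : A = 0
  · exact ⟨0, 0, by simp [hzero]⟩
  obtain ⟨i, j, hij⟩ : ∃ i j, A i j ≠ 0 := by
    by_contra! h
    exact hzero (ext h)
  refine ⟨(A i j)⁻¹ • A i, A j, ?_⟩
  rw [smul_vecMulVec, vecMulVec_smul, ← smul_sub,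
    ← smul_eq_vecMulVec_sub_of_pfaffianFin4_eq_zero hA hdiag hpf, inv_smul_smul₀ hij]

end Matrix

theorem wedge_iff_det_eq_zero (A : Matrix (Fin 4) (Fin 4) ℝ) (hA : Aᵀ = -A) :
    (∃ u v : Fin 4 → ℝ, A = vecMulVec u v - vecMulVec v u) ↔ A.det = 0 := by
  have hskew : ∀ i j, A j i = -A i j := fun i j => by simpa using congrFun₂ hA i j
  have hdiag : ∀ i, A i i = 0 := fun i => self_eq_neg.mp (hskew i i)
  rw [det_eq_pfaffianFin4_sq hskew hdiag, sq_eq_zero_iff]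
  constructor
  · rintro ⟨u, v, rfl⟩
    exact pfaffianFin4_vecMulVec_sub u v
  · exact exists_eq_vecMulVec_sub_of_pfaffianFin4_eq_zero hskew hdiag
end

section
/- For any L in so(g), where g is a 4×4 real symmetric matrix with det g < 0, one has det L ≤ 0. -/
/-! `g * L` is skew-symmetric, and the determinant of a skew-symmetric `4 × 4` matrix is the square
of its Pfaffian. Hence `det g * det L = det (g * L) ≥ 0`, which together with `det g < 0` forces
`det L ≤ 0`. -/

open Matrix

namespace Matrix

variable {R : Type*} [CommRing R]

theorem transpose_mul_eq_neg_of_mem_so {n : Type*} [Fintype n] {g L : Matrix n n R}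
    (hg : gᵀ = g) (hL : Lᵀ * g + g * L = 0) : (g * L)ᵀ = -(g * L) := by
  rw [transpose_mul, hg]
  exact eq_neg_of_add_eq_zero_left hL

def pfaffianFour (A : Matrix (Fin 4) (Fin 4) R) : R :=
  A 0 1 * A 2 3 - A 0 2 * A 1 3 + A 0 3 * A 1 2

theorem det_eq_pfaffianFour_sq {A : Matrix (Fin 4) (Fin 4) R} (hA : Aᵀ = -A)
    (hdiag : ∀ i, A i i = 0) : A.det = pfaffianFour A ^ 2 := by
  have skew (i j : Fin 4) : A j i = -A i j := by
    simpa using congrFun (congrFun hA i) j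
  rw [det_succ_row_zero]
  simp only [det_fin_three, submatrix_apply, Fin.succAbove, Fin.sum_univ_succ, Fin.succ_zero_eq_one,
    Fin.castSucc_zero, Fin.succ_one_eq_two, Fin.castSucc_one, Fin.reduceSucc, Fin.reduceCastSucc,
    Fin.coe_ofNat_eq_mod, Nat.zero_mod, Fin.val_succ, Fin.lt_one_iff, Fin.reduceEq, Fin.reduceLT,
    lt_self_iff_false, not_lt_zero, Fin.succ_pos, ↓reduceIte, Finset.univ_unique, Fin.default_eq_zero,
    Finset.sum_singleton, pfaffianFour]
  rw [skew 1 0, skew 2 0, skew 3 0, skew 2 1, skew 3 1, skew 3 2, hdiag 0, hdiag 1, hdiag 2, hdiag 3]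
  ring

theorem det_nonneg_of_transpose_eq_neg [LinearOrder R] [IsStrictOrderedRing R]
    {A : Matrix (Fin 4) (Fin 4) R} (hA : Aᵀ = -A) : 0 ≤ A.det := by
  have hdiag (i : Fin 4) : A i i = 0 := by
    have := congrFun (congrFun hA i) i
    simp only [transpose_apply, neg_apply] at this
    linarith
  rw [det_eq_pfaffianFour_sq hA hdiag]
  exact sq_nonneg _

end Matrix

theorem det_nonpos_of_mem_so (g L : Matrix (Fin 4) (Fin 4) ℝ)
    (hsymm : gᵀ = g) (hg : g.det < 0) (hL : Lᵀ * g + g * L = 0) :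
    L.det ≤ 0 := by
  have hgL : 0 ≤ g.det * L.det := by
    rw [← det_mul]
    exact det_nonneg_of_transpose_eq_neg (transpose_mul_eq_neg_of_mem_so hsymm hL)
  exact nonpos_of_mul_nonneg_right hgL hg
end

section
/- For any L in so(g), where g is a 4×4 real Lorentz metric (symmetric, det g < 0), L satisfies L⁴ + (tr₂ L)·L² + (det L)·I = 0, where tr₂ L = −½ tr(L²). -/
/-!
Conjugation by `g` carries `L` to `-Lᵀ`, so `L` and `-L` have the same characteristic polynomial
and its odd coefficients vanish: `χ_L = X⁴ + c₂ X² + c₀`. Here `c₀ = det L`, and `c₂`, the sum of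
the principal `2 × 2` minors, is `((tr L)² - tr L²) / 2 = -tr L² / 2` because `tr L = -c₃ = 0`.
The relation is then Cayley–Hamilton.
-/

open Matrix Polynomial Finset

namespace Matrix

variable {n R : Type*} [DecidableEq n] [CommRing R]

lemma det_submatrix_pair (M : Matrix n n R) {i j : n} (hij : i ≠ j) :
    (M.submatrix (Subtype.val : ({i, j} : Finset n) → n) Subtype.val).det =
      M i i * M j j - M i j * M j i := by
  let e : Fin 2 ≃ ({i, j} : Finset n) :=
    Equiv.ofBijective ![⟨i, by simp⟩, ⟨j, by simp⟩] <|
      (Fintype.bijective_iff_injective_and_card _).mpr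
        ⟨fun a b hab => by fin_cases a <;> fin_cases b <;> simp_all [eq_comm],
          by rw [Fintype.card_fin, Fintype.card_coe, card_pair hij]⟩
  rw [← det_submatrix_equiv_self e, det_fin_two]
  simp [e]

variable [Fintype n]

lemma two_mul_sum_minors_two (M : Matrix n n R) :
    2 * ∑ s ∈ univ.powersetCard 2, (M.submatrix (Subtype.val : s → n) Subtype.val).det =
      M.trace ^ 2 - (M * M).trace := by
  set f : n × n → R := fun p => M p.1 p.1 * M p.2 p.2 - M p.1 p.2 * M p.2 p.1
  have htrace : M.trace ^ 2 - (M * M).trace = ∑ p ∈ univ.offDiag, f p := by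
    have hdiag : ∀ p ∈ (univ : Finset n).diag, f p = 0 := fun p hp => by
      simp [f, (mem_diag.mp hp).2]
    calc M.trace ^ 2 - (M * M).trace = ∑ p ∈ univ ×ˢ univ, f p := by
          simp only [f, sum_product, trace, diag_apply, mul_apply, sq, sum_mul_sum,
            ← sum_sub_distrib]
      _ = ∑ p ∈ univ.diag, f p + ∑ p ∈ univ.offDiag, f p := by
          rw [← sum_union (disjoint_diag_offDiag _), diag_union_offDiag]
      _ = ∑ p ∈ univ.offDiag, f p := by rw [sum_eq_zero hdiag, zero_add]
  have hfiber : ∀ s ∈ univ.powersetCard 2,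
      ∑ p ∈ univ.offDiag with {p.1, p.2} = s, f p =
        2 * (M.submatrix (Subtype.val : s → n) Subtype.val).det := by
    intro s hs
    obtain ⟨i, j, hij, rfl⟩ := card_eq_two.mp (mem_powersetCard.mp hs).2
    have hpairs : {p ∈ (univ : Finset n).offDiag | ({p.1, p.2} : Finset n) = {i, j}} =
        {(i, j), (j, i)} := by
      ext ⟨a, b⟩
      rw [mem_filter, ← Finset.coe_inj, coe_pair, coe_pair, Set.pair_eq_pair_iff]
      aesop
    rw [hpairs, sum_pair fun h => hij (Prod.ext_iff.mp h).1, det_submatrix_pair M hij]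
    ring
  rw [htrace, ← sum_fiberwise_of_maps_to (g := fun p : n × n => ({p.1, p.2} : Finset n)),
    mul_sum]
  · exact (sum_congr rfl hfiber).symm
  · intro p hp
    rw [mem_offDiag] at hp
    exact mem_powersetCard.mpr ⟨subset_univ _, card_pair hp.2.2⟩

lemma two_mul_charpoly_coeff_card_sub_two (M : Matrix n n R) (hn : 2 ≤ Fintype.card n) :
    2 * M.charpoly.coeff (Fintype.card n - 2) = M.trace ^ 2 - (M * M).trace := by
  rw [charpoly_coeff_eq_sum_minors M 2 hn, neg_one_sq, one_mul, two_mul_sum_minors_two]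

lemma charpoly_neg_coeff_card_sub (M : Matrix n n R) {k : ℕ} (hk : k ≤ Fintype.card n) :
    (-M).charpoly.coeff (Fintype.card n - k) =
      (-1) ^ k * M.charpoly.coeff (Fintype.card n - k) := by
  have hminor : ∀ s ∈ univ.powersetCard k,
      ((-M).submatrix (Subtype.val : s → n) Subtype.val).det =
        (-1) ^ k * (M.submatrix (Subtype.val : s → n) Subtype.val).det := fun s hs => by
    simp only [submatrix_neg, Pi.neg_apply, det_neg, Fintype.card_coe,
      (mem_powersetCard.mp hs).2]
  rw [charpoly_coeff_eq_sum_minors (-M) k hk, charpoly_coeff_eq_sum_minors M k hk,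
    Finset.sum_congr rfl hminor, ← Finset.mul_sum]

lemma charpoly_coeff_card_sub_eq_zero_of_odd [IsAddTorsionFree R] {M : Matrix n n R}
    (hM : (-M).charpoly = M.charpoly) {k : ℕ} (hk : k ≤ Fintype.card n) (hodd : Odd k) :
    M.charpoly.coeff (Fintype.card n - k) = 0 := by
  have h := charpoly_neg_coeff_card_sub M hk
  rw [hM, hodd.neg_one_pow, neg_one_mul] at h
  exact self_eq_neg.mp h

lemma IsSkewAdjoint.charpoly_neg {g L : Matrix n n R} (hg : IsUnit g.det)
    (hL : g.IsSkewAdjoint L) : (-L).charpoly = L.charpoly := by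
  have hconj : (-L)ᵀ = g * L * g⁻¹ := by
    have h : (-L)ᵀ * g = g * L := by
      rw [transpose_neg, neg_mul, hL, mul_neg, neg_neg]
    rw [← h, mul_assoc, mul_nonsing_inv _ hg, mul_one]
  rw [← charpoly_transpose, hconj, charpoly_mul_comm, ← mul_assoc, nonsing_inv_mul _ hg, one_mul]

end Matrix

theorem quartic_relation_general (g L : Matrix (Fin 4) (Fin 4) ℝ)
    (hg : g.det < 0) (hL : Lᵀ * g + g * L = 0) :
    L ^ 4 + (-(Matrix.trace (L * L)) / 2) • L ^ 2 + L.det • (1 : Matrix (Fin 4) (Fin 4) ℝ) = 0 := by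
  have hskew : g.IsSkewAdjoint L := by
    rw [Matrix.IsSkewAdjoint, Matrix.IsAdjointPair, mul_neg]
    exact eq_neg_of_add_eq_zero_left hL
  have heven := hskew.charpoly_neg (isUnit_iff_ne_zero.mpr hg.ne)
  have hc3 : L.charpoly.coeff 3 = 0 :=
    charpoly_coeff_card_sub_eq_zero_of_odd heven (k := 1) (by simp) odd_one
  have hc1 : L.charpoly.coeff 1 = 0 :=
    charpoly_coeff_card_sub_eq_zero_of_odd heven (k := 3) (by simp) (by decide)
  have htrace : L.trace = 0 := by
    simpa [hc3] using trace_eq_neg_charpoly_coeff L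
  have hc2 : L.charpoly.coeff 2 = -(L * L).trace / 2 := by
    have h := two_mul_charpoly_coeff_card_sub_two L (by simp)
    rw [htrace, Fintype.card_fin] at h
    linarith
  have hc0 : L.charpoly.coeff 0 = L.det := by
    rw [det_eq_sign_charpoly_coeff, Fintype.card_fin]; norm_num
  have hc4 : L.charpoly.coeff 4 = 1 := by
    simpa using (charpoly_monic L).coeff_natDegree
  have hCH := aeval_self_charpoly L
  rw [aeval_eq_sum_range, charpoly_natDegree_eq_dim, Fintype.card_fin] at hCH
  simp only [sum_range_succ, sum_range_zero, hc0, hc1, hc2, hc3, hc4, pow_zero, pow_one,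
    zero_smul, one_smul, zero_add, add_zero] at hCH
  rw [← hCH]
  abel

theorem quartic_relation (g L : Matrix (Fin 4) (Fin 4) ℝ)
    (hsymm : gᵀ = g) (hg : g.det < 0) (hL : Lᵀ * g + g * L = 0) :
    L ^ 4 + (-(Matrix.trace (L * L)) / 2) • L ^ 2 + L.det • (1 : Matrix (Fin 4) (Fin 4) ℝ) = 0 :=
  quartic_relation_general g L hg hL
end

section
/- Let g be a 4×4 real symmetric matrix with det g < 0, and let L ∈ so(g). Then L is simple (i.e., L = (u vᵀ − v uᵀ) g for some u, v ∈ ℝ⁴) if and only if det L = 0. -/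
/-!
Since `g` is symmetric and invertible, `L ∈ so(g)` exactly when `A := L g⁻¹` is antisymmetric,
and `L` is simple exactly when `A = u vᵀ - v uᵀ`. Such an `A` factors through a
2-dimensional space, so it is singular. Conversely, an antisymmetric `4 × 4` matrix has
`det A = Pf(A)²`, and `Pf(A) = 0` is equivalent to the quadratic Plücker relations
`A i j * A k l = A k i * A l j - A k j * A l i`; if `A i j ≠ 0`, these say that `A` is the
wedge of its `i`-th column (scaled by `(A i j)⁻¹`) with its `j`-th column.
-/

open Matrix

namespace Matrix

section Wedge

variable {K : Type*} [Field K] {n : Type*}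

theorem vecMulVec_sub_vecMulVec_eq_mul (u v : n → K) :
    vecMulVec u v - vecMulVec v u = (of ![u, v])ᵀ * of ![v, -u] := by
  ext i j
  simp [mul_apply, Fin.sum_univ_two, vecMulVec_apply]
  ring

theorem det_vecMulVec_sub_vecMulVec [Fintype n] [DecidableEq n] (hn : 2 < Fintype.card n)
    (u v : n → K) : (vecMulVec u v - vecMulVec v u).det = 0 := by
  by_contra hdet
  have hrank := rank_of_isUnit _ ((isUnit_iff_isUnit_det _).mpr (isUnit_iff_ne_zero.mpr hdet))
  have := (rank_mul_le_left (of ![u, v])ᵀ (of ![v, -u])).trans (rank_le_card_width _)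
  rw [← vecMulVec_sub_vecMulVec_eq_mul, hrank, Fintype.card_fin] at this
  omega

theorem eq_vecMulVec_sub_vecMulVec_of_plucker (A : Matrix n n K) {i j : n} (hij : A i j ≠ 0)
    (hpl : ∀ k l, A i j * A k l = A k i * A l j - A k j * A l i) :
    A = vecMulVec (fun k => A k i / A i j) (fun k => A k j) -
      vecMulVec (fun k => A k j) (fun k => A k i / A i j) := by
  ext k l
  simp only [sub_apply, vecMulVec_apply]
  field_simp
  linear_combination hpl k l

end Wedge

section Pfaffian

variable {R : Type*} [CommRing R]

def pfaffian4 (A : Matrix (Fin 4) (Fin 4) R) : R :=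
  A 0 1 * A 2 3 - A 0 2 * A 1 3 + A 0 3 * A 1 2

variable [NoZeroDivisors R] [CharZero R]

theorem eq_of_transpose_eq_neg_fin_four {A : Matrix (Fin 4) (Fin 4) R} (hA : Aᵀ = -A) :
    A = !![0, A 0 1, A 0 2, A 0 3;
      -A 0 1, 0, A 1 2, A 1 3;
      -A 0 2, -A 1 2, 0, A 2 3;
      -A 0 3, -A 1 3, -A 2 3, 0] := by
  have hswap : ∀ i j, A j i = -A i j := fun i j => congrFun (congrFun hA i) j
  have hdiag : ∀ i, A i i = 0 := fun i => CharZero.eq_neg_self_iff.mp (hswap i i)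
  ext i j
  fin_cases i <;> fin_cases j <;>
    simp [hdiag, hswap 0 1, hswap 0 2, hswap 0 3, hswap 1 2, hswap 1 3, hswap 2 3]

theorem det_eq_pfaffian4_sq {A : Matrix (Fin 4) (Fin 4) R} (hA : Aᵀ = -A) :
    A.det = pfaffian4 A ^ 2 := by
  rw [eq_of_transpose_eq_neg_fin_four hA]
  simp [pfaffian4, det_succ_row_zero, Fin.sum_univ_succ, Fin.succAbove]
  ring

theorem plucker_of_pfaffian4_eq_zero {A : Matrix (Fin 4) (Fin 4) R} (hA : Aᵀ = -A)
    (hpf : pfaffian4 A = 0) (i j k l : Fin 4) :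
    A i j * A k l = A k i * A l j - A k j * A l i := by
  rw [pfaffian4] at hpf
  rw [eq_of_transpose_eq_neg_fin_four hA]
  fin_cases i <;> fin_cases j <;> fin_cases k <;> fin_cases l <;> simp <;>
    first | linear_combination | linear_combination hpf | linear_combination -hpf

end Pfaffian

theorem exists_eq_vecMulVec_sub_vecMulVec_of_det_eq_zero {K : Type*} [Field K] [CharZero K]
    {A : Matrix (Fin 4) (Fin 4) K} (hA : Aᵀ = -A) (hdet : A.det = 0) :
    ∃ u v : Fin 4 → K, A = vecMulVec u v - vecMulVec v u := by
  by_cases hzero : A = 0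
  · exact ⟨0, 0, by simp [hzero]⟩
  obtain ⟨i, j, hij⟩ : ∃ i j, A i j ≠ 0 := by
    by_contra! h
    exact hzero (ext h)
  have hpf : pfaffian4 A = 0 := pow_eq_zero_iff two_ne_zero |>.mp (det_eq_pfaffian4_sq hA ▸ hdet)
  exact ⟨_, _,
    eq_vecMulVec_sub_vecMulVec_of_plucker A hij (plucker_of_pfaffian4_eq_zero hA hpf i j)⟩

theorem transpose_mul_inv_eq_neg {R : Type*} [CommRing R] {n : Type*} [Fintype n] [DecidableEq n]
    {g L : Matrix n n R} (hsymm : gᵀ = g) (hg : IsUnit g.det) (hL : Lᵀ * g + g * L = 0) :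
    (L * g⁻¹)ᵀ = -(L * g⁻¹) := by
  have hLt : Lᵀ = -(g * L) * g⁻¹ := by
    rw [← eq_neg_of_add_eq_zero_left hL, mul_nonsing_inv_cancel_right _ _ hg]
  rw [transpose_mul, transpose_nonsing_inv, hsymm, hLt, Matrix.neg_mul, Matrix.mul_neg,
    Matrix.mul_assoc, ← Matrix.mul_assoc g⁻¹, nonsing_inv_mul _ hg, Matrix.one_mul]

end Matrix

theorem simple_iff_det_eq_zero (g L : Matrix (Fin 4) (Fin 4) ℝ)
    (hsymm : gᵀ = g) (hg : g.det < 0) (hL : Lᵀ * g + g * L = 0) :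
    (∃ u v : Fin 4 → ℝ, L = (vecMulVec u v - vecMulVec v u) * g) ↔ L.det = 0 := by
  have hg' : IsUnit g.det := hg.ne.isUnit
  have hLA : L = L * g⁻¹ * g := (nonsing_inv_mul_cancel_right g L hg').symm
  constructor
  · rintro ⟨u, v, rfl⟩
    rw [det_mul, det_vecMulVec_sub_vecMulVec (by simp), zero_mul]
  · intro hdet
    have hAdet : (L * g⁻¹).det = 0 := by
      have := congrArg det hLA
      rwa [det_mul, hdet, eq_comm, mul_eq_zero, or_iff_left hg.ne] at this
    obtain ⟨u, v, huv⟩ :=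
      exists_eq_vecMulVec_sub_vecMulVec_of_det_eq_zero (transpose_mul_inv_eq_neg hsymm hg' hL) hAdet
    exact ⟨u, v, huv ▸ hLA⟩
end

section
/- Let g be a 4×4 real symmetric invertible matrix, u, v ∈ ℝ⁴, L = u vᵀ g − v uᵀ g, and suppose tr₂ L ≠ 0. Then P := −L²/(tr₂ L) satisfies P² = P, tr P = 2, (gP)ᵀ = gP, and the image of P equals the span of u and v. -/
/-!
Write `L = u ∧^g v`. Then `L x = ⟨v, x⟩ u - ⟨u, x⟩ v` for the form `⟨x, y⟩ = x ⬝ g y`, so `L` maps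
into `span {u, v}` and, `g` being symmetric, `L²` acts on `span {u, v}` as multiplication by
`-Δ`, where `Δ = ⟨u, u⟩⟨v, v⟩ - ⟨u, v⟩²` is the Gram determinant. Computing traces gives
`tr L = 0` and `tr L² = -2Δ`, hence `tr₂ L = Δ`, and `P = -L²/Δ` is the identity on
`span {u, v}` and maps into it. This gives idempotence, the range and the trace; `gP` is
symmetric because `gL` is antisymmetric.
-/

open Matrix

/-- Second order trace of a 4×4 matrix. -/
noncomputable def tr2 (M : Matrix (Fin 4) (Fin 4) ℝ) : ℝ :=
  (Matrix.trace M ^ 2 - Matrix.trace (M * M)) / 2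

namespace Matrix

variable {K n : Type*} [CommRing K] [Fintype n]

/-- The paper's `u ∧^g v`. -/
def wedge (g : Matrix n n K) (u v : n → K) : Matrix n n K :=
  (vecMulVec u v - vecMulVec v u) * g

def gramDet (g : Matrix n n K) (u v : n → K) : K :=
  (u ⬝ᵥ g *ᵥ u) * (v ⬝ᵥ g *ᵥ v) - (u ⬝ᵥ g *ᵥ v) ^ 2

theorem wedge_mulVec (g : Matrix n n K) (u v x : n → K) :
    wedge g u v *ᵥ x = (v ⬝ᵥ g *ᵥ x) • u - (u ⬝ᵥ g *ᵥ x) • v := by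
  rw [wedge, ← mulVec_mulVec, sub_mulVec, vecMulVec_mulVec, vecMulVec_mulVec]
  simp only [op_smul_eq_smul]

theorem wedge_mulVec_mem_span (g : Matrix n n K) (u v x : n → K) :
    wedge g u v *ᵥ x ∈ Submodule.span K {u, v} := by
  rw [wedge_mulVec]
  exact sub_mem (Submodule.smul_mem _ _ (Submodule.subset_span (by simp)))
    (Submodule.smul_mem _ _ (Submodule.subset_span (by simp)))

section

variable {g : Matrix n n K}

theorem dotProduct_mulVec_comm_of_transpose_eq (hg : gᵀ = g) (x y : n → K) :
    x ⬝ᵥ g *ᵥ y = y ⬝ᵥ g *ᵥ x := by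
  rw [← dotProduct_transpose_mulVec, hg]

theorem wedge_sq_mulVec_left (hg : gᵀ = g) (u v : n → K) :
    (wedge g u v * wedge g u v) *ᵥ u = -gramDet g u v • u := by
  rw [← mulVec_mulVec, wedge_mulVec g u v u, mulVec_sub, mulVec_smul, mulVec_smul, wedge_mulVec,
    wedge_mulVec, gramDet, dotProduct_mulVec_comm_of_transpose_eq hg v u]
  module

theorem wedge_sq_mulVec_right (hg : gᵀ = g) (u v : n → K) :
    (wedge g u v * wedge g u v) *ᵥ v = -gramDet g u v • v := by
  rw [← mulVec_mulVec, wedge_mulVec g u v v, mulVec_sub, mulVec_smul, mulVec_smul, wedge_mulVec,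
    wedge_mulVec, gramDet, dotProduct_mulVec_comm_of_transpose_eq hg v u]
  module

theorem wedge_sq_mulVec_of_mem_span (hg : gᵀ = g) {u v x : n → K}
    (hx : x ∈ Submodule.span K {u, v}) :
    (wedge g u v * wedge g u v) *ᵥ x = -gramDet g u v • x := by
  obtain ⟨a, b, rfl⟩ := Submodule.mem_span_pair.mp hx
  rw [mulVec_add, mulVec_smul, mulVec_smul, wedge_sq_mulVec_left hg,
    wedge_sq_mulVec_right hg, smul_add, smul_comm a, smul_comm b]

theorem wedge_eq_of_transpose_eq (hg : gᵀ = g) (u v : n → K) :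
    wedge g u v = vecMulVec u (g *ᵥ v) - vecMulVec v (g *ᵥ u) := by
  rw [wedge, sub_mul, vecMulVec_mul, vecMulVec_mul, ← vecMul_transpose, ← vecMul_transpose, hg]

theorem trace_wedge (hg : gᵀ = g) (u v : n → K) : trace (wedge g u v) = 0 := by
  rw [wedge_eq_of_transpose_eq hg, trace_sub, trace_vecMulVec, trace_vecMulVec,
    dotProduct_mulVec_comm_of_transpose_eq hg, sub_self]

theorem trace_wedge_mul_wedge (hg : gᵀ = g) (u v : n → K) :
    trace (wedge g u v * wedge g u v) = -2 * gramDet g u v := by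
  rw [wedge_eq_of_transpose_eq hg]
  simp only [sub_mul, mul_sub, vecMulVec_mul_vecMulVec, trace_sub, trace_vecMulVec,
    dotProduct_smul, smul_eq_mul, gramDet]
  rw [dotProduct_comm (g *ᵥ v) u, dotProduct_comm (g *ᵥ v) v, dotProduct_comm (g *ᵥ u) u,
    dotProduct_comm (g *ᵥ u) v, dotProduct_mulVec_comm_of_transpose_eq hg v u]
  ring

theorem transpose_wedge_mul (hg : gᵀ = g) (u v : n → K) :
    (wedge g u v)ᵀ * g = -(g * wedge g u v) := by
  rw [wedge, transpose_mul, hg, transpose_sub, transpose_vecMulVec, transpose_vecMulVec,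
    Matrix.mul_assoc, ← neg_sub, Matrix.neg_mul, Matrix.mul_neg]

theorem transpose_mul_mul_self_of_transpose_mul_eq_neg (hg : gᵀ = g) {L : Matrix n n K}
    (hL : Lᵀ * g = -(g * L)) : (g * (L * L))ᵀ = g * (L * L) := by
  rw [transpose_mul, transpose_mul, hg, Matrix.mul_assoc, hL, Matrix.mul_neg,
    ← Matrix.mul_assoc, hL, Matrix.neg_mul, neg_neg, Matrix.mul_assoc]

end

end Matrix

theorem tr2_wedge {g : Matrix (Fin 4) (Fin 4) ℝ} (hg : gᵀ = g) (u v : Fin 4 → ℝ) :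
    tr2 (wedge g u v) = gramDet g u v := by
  rw [tr2, trace_wedge hg, trace_wedge_mul_wedge hg]
  ring

theorem proj_of_simple_general (g : Matrix (Fin 4) (Fin 4) ℝ)
    (hsymm : gᵀ = g) (u v : Fin 4 → ℝ)
    (L : Matrix (Fin 4) (Fin 4) ℝ)
    (hLdef : L = (vecMulVec u v - vecMulVec v u) * g)
    (htr2 : tr2 L ≠ 0)
    (P : Matrix (Fin 4) (Fin 4) ℝ) (hPdef : P = (-(tr2 L)⁻¹) • (L * L)) :
    P * P = P ∧ Matrix.trace P = 2 ∧ (g * P)ᵀ = g * P ∧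
    LinearMap.range P.mulVecLin = Submodule.span ℝ ({u, v} : Set (Fin 4 → ℝ)) := by
  change L = wedge g u v at hLdef
  rw [hLdef, tr2_wedge hsymm] at hPdef htr2
  have hP_mem : ∀ x, P *ᵥ x ∈ Submodule.span ℝ {u, v} := fun x ↦ by
    rw [hPdef, smul_mulVec, ← mulVec_mulVec]
    exact Submodule.smul_mem _ _ (wedge_mulVec_mem_span g u v _)
  have hP_fix : ∀ x ∈ Submodule.span ℝ {u, v}, P *ᵥ x = x := fun x hx ↦ by
    rw [hPdef, smul_mulVec, wedge_sq_mulVec_of_mem_span hsymm hx, smul_smul, neg_mul_neg,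
      inv_mul_cancel₀ htr2, one_smul]
  refine ⟨?_, ?_, ?_, ?_⟩
  · exact ext_iff_mulVec.mpr fun x ↦ by rw [← mulVec_mulVec, hP_fix _ (hP_mem x)]
  · rw [hPdef, trace_smul, trace_wedge_mul_wedge hsymm, smul_eq_mul]
    field_simp
  · rw [hPdef, Matrix.mul_smul, transpose_smul,
      transpose_mul_mul_self_of_transpose_mul_eq_neg hsymm (transpose_wedge_mul hsymm u v)]
  · refine le_antisymm ?_ fun x hx ↦ ⟨x, hP_fix x hx⟩
    rintro _ ⟨x, rfl⟩
    exact hP_mem x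

theorem proj_of_simple (g : Matrix (Fin 4) (Fin 4) ℝ)
    (hsymm : gᵀ = g) (hinv : IsUnit g.det) (u v : Fin 4 → ℝ)
    (L : Matrix (Fin 4) (Fin 4) ℝ)
    (hLdef : L = (vecMulVec u v - vecMulVec v u) * g)
    (htr2 : tr2 L ≠ 0)
    (P : Matrix (Fin 4) (Fin 4) ℝ) (hPdef : P = (-(tr2 L)⁻¹) • (L * L)) :
    P * P = P ∧ Matrix.trace P = 2 ∧ (g * P)ᵀ = g * P ∧
    LinearMap.range P.mulVecLin = Submodule.span ℝ ({u, v} : Set (Fin 4 → ℝ)) :=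
  proj_of_simple_general g hsymm u v L hLdef htr2 P hPdef
end

section
/- Let g be a 4×4 real symmetric matrix with det g < 0, and let L ∈ so(g) with det L ≠ 0. Let μ₊, μ₋ be the two roots of x² + (tr₂ L)x + det L = 0 with μ₊ > 0 > μ₋, and define P± := ±(L² − μ∓ I)/(μ₊ − μ₋). Then P₊ + P₋ = I, P₊ P₋ = 0 = P₋ P₊, P±² = P±, and P± commutes with L. -/
/-!
A skew-adjoint `L` for a nondegenerate `g` is conjugate to `-Lᵀ`, so its odd-power traces vanish
and the 4 × 4 Cayley–Hamilton identity collapses to `L⁴ + (tr₂ L) L² + (det L) 1 = 0`: the matrix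
`L²` is annihilated by `(X - μ₊)(X - μ₋)`. For distinct roots, the Lagrange interpolation
polynomials evaluated at `L²` are complementary orthogonal idempotents, and as polynomials in `L`
they commute with `L`.
-/

open Matrix

theorem completeOrthogonalIdempotents_of_quadratic {K A : Type*} [Field K] [Ring A]
    [Algebra K A] {x : A} {p q a b : K} (hx : x * x + p • x + q • (1 : A) = 0)
    (ha : a ^ 2 + p * a + q = 0) (hb : b ^ 2 + p * b + q = 0) (hab : a ≠ b) :
    CompleteOrthogonalIdempotents ![(a - b)⁻¹ • (x - b • 1), (-(a - b)⁻¹) • (x - a • 1)] := by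
  have hab' : a - b ≠ 0 := sub_ne_zero.mpr hab
  have hsum : a + b + p = 0 := mul_left_cancel₀ hab' (by linear_combination ha - hb)
  have hprod : a * b = q := by linear_combination a * hsum - ha
  have hfactor (c d : K) :
      (x - c • 1) * (x - d • 1) = x * x + (-(c + d)) • x + (c * d) • 1 := by
    simp only [mul_sub, sub_mul, smul_mul_assoc, mul_smul_comm, mul_one, one_mul]
    module
  have hab0 : (x - a • 1) * (x - b • 1) = 0 := by
    rw [hfactor, hprod, ← hx, eq_neg_of_add_eq_zero_right hsum]
  have hba0 : (x - b • 1) * (x - a • 1) = 0 := by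
    rw [hfactor, mul_comm, hprod, ← hx, eq_neg_of_add_eq_zero_right hsum, add_comm b]
  rw [CompleteOrthogonalIdempotents.pair_iff'ₛ]
  refine ⟨by rw [smul_mul_smul_comm, hba0, smul_zero],
    by rw [smul_mul_smul_comm, hab0, smul_zero], ?_⟩
  rw [neg_smul, ← sub_eq_add_neg, ← smul_sub,
    show x - b • 1 - (x - a • 1) = (a - b) • (1 : A) by module, smul_smul,
    inv_mul_cancel₀ hab', one_smul]

namespace Matrix

variable {n K : Type*} [Fintype n] [DecidableEq n] [Field K] {J A : Matrix n n K}

theorem IsAdjointPair.pow {A' : Matrix n n K} (h : J.IsAdjointPair J A A') (k : ℕ) :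
    J.IsAdjointPair J (A ^ k) (A' ^ k) := by
  induction k with
  | zero => simp [IsAdjointPair]
  | succ k ih =>
    unfold IsAdjointPair at *
    rw [pow_succ, pow_succ', transpose_mul, Matrix.mul_assoc, ih, ← Matrix.mul_assoc, h,
      Matrix.mul_assoc]

theorem IsSkewAdjoint.pow_of_odd (h : J.IsSkewAdjoint A) {k : ℕ} (hk : Odd k) :
    J.IsSkewAdjoint (A ^ k) := by
  have := IsAdjointPair.pow h k
  rwa [hk.neg_pow] at this

theorem IsSkewAdjoint.trace_eq_zero [CharZero K] (hJ : IsUnit J.det) (h : J.IsSkewAdjoint A) :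
    A.trace = 0 := by
  have hA : J⁻¹ * (Aᵀ * J) = -A := by
    rw [show Aᵀ * J = J * -A from h, ← Matrix.mul_assoc, nonsing_inv_mul J hJ, Matrix.one_mul]
  have : A.trace = -A.trace := by
    rw [← trace_neg, ← hA, trace_mul_comm, Matrix.mul_assoc, mul_nonsing_inv J hJ,
      Matrix.mul_one, trace_transpose]
  exact CharZero.eq_neg_self_iff.mp this

set_option maxHeartbeats 1000000 in
theorem cayley_hamilton_fin_four (M : Matrix (Fin 4) (Fin 4) ℝ) :
    M ^ 4 - trace M • M ^ 3 + tr2 M • M ^ 2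
      - ((trace M ^ 3 - 3 * trace M * trace (M ^ 2) + 2 * trace (M ^ 3)) / 6) • M
      + M.det • (1 : Matrix (Fin 4) (Fin 4) ℝ) = 0 := by
  simp only [tr2, pow_succ, pow_zero, one_mul]
  rw [det_succ_row_zero]
  simp only [Fin.sum_univ_four, det_fin_three, trace, diag]
  ext i j
  fin_cases i <;> fin_cases j <;>
    simp [mul_apply, Fin.sum_univ_four, Fin.succAbove, submatrix] <;> ring

theorem IsSkewAdjoint.cayley_hamilton_fin_four {J L : Matrix (Fin 4) (Fin 4) ℝ}
    (hJ : IsUnit J.det) (hL : J.IsSkewAdjoint L) :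
    L * L * (L * L) + tr2 L • (L * L) + L.det • (1 : Matrix (Fin 4) (Fin 4) ℝ) = 0 := by
  have hL1 : L.trace = 0 := hL.trace_eq_zero hJ
  have hL3 : (L ^ 3).trace = 0 := (hL.pow_of_odd (by decide)).trace_eq_zero hJ
  have h := Matrix.cayley_hamilton_fin_four L
  rw [hL1, hL3] at h
  simpa [pow_succ, Matrix.mul_assoc] using h

end Matrix

theorem projections_of_nonsimple_general (g L : Matrix (Fin 4) (Fin 4) ℝ)
    (hg : g.det < 0) (hL : Lᵀ * g + g * L = 0)
    (μp μm : ℝ) (hμp : μp ^ 2 + tr2 L * μp + L.det = 0)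
    (hμm : μm ^ 2 + tr2 L * μm + L.det = 0) (hμppos : 0 < μp) (hμmneg : μm < 0)
    (Pp Pm : Matrix (Fin 4) (Fin 4) ℝ)
    (hPp : Pp = ((μp - μm)⁻¹) • (L * L - μm • (1 : Matrix (Fin 4) (Fin 4) ℝ)))
    (hPm : Pm = (-(μp - μm)⁻¹) • (L * L - μp • (1 : Matrix (Fin 4) (Fin 4) ℝ))) :
    Pp + Pm = 1 ∧ Pp * Pm = 0 ∧ Pm * Pp = 0 ∧ Pp * Pp = Pp ∧ Pm * Pm = Pm ∧
    Pp * L = L * Pp ∧ Pm * L = L * Pm := by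
  have hskew : g.IsSkewAdjoint L := by
    rw [Matrix.IsSkewAdjoint, Matrix.IsAdjointPair, Matrix.mul_neg]
    exact eq_neg_of_add_eq_zero_left hL
  have hquad := hskew.cayley_hamilton_fin_four (isUnit_iff_ne_zero.mpr hg.ne)
  obtain ⟨⟨hidem, hortho⟩, hcomplete⟩ :=
    completeOrthogonalIdempotents_of_quadratic hquad hμp hμm (hμmneg.trans hμppos).ne'
  have hcomm (c : ℝ) : Commute L (L * L - c • 1) :=
    ((Commute.refl L).mul_right (Commute.refl L)).sub_right ((Commute.one_right L).smul_right c)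
  subst hPp hPm
  exact ⟨by simpa [Fin.sum_univ_two] using hcomplete,
    hortho (i := 0) (j := 1) (by decide), hortho (i := 1) (j := 0) (by decide),
    hidem 0, hidem 1, ((hcomm μm).smul_right _).eq.symm, ((hcomm μp).smul_right _).eq.symm⟩

theorem projections_of_nonsimple (g L : Matrix (Fin 4) (Fin 4) ℝ)
    (hsymm : gᵀ = g) (hg : g.det < 0) (hL : Lᵀ * g + g * L = 0) (hdet : L.det ≠ 0)
    (μp μm : ℝ) (hμp : μp ^ 2 + tr2 L * μp + L.det = 0)
    (hμm : μm ^ 2 + tr2 L * μm + L.det = 0) (hμppos : 0 < μp) (hμmneg : μm < 0)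
    (Pp Pm : Matrix (Fin 4) (Fin 4) ℝ)
    (hPp : Pp = ((μp - μm)⁻¹) • (L * L - μm • (1 : Matrix (Fin 4) (Fin 4) ℝ)))
    (hPm : Pm = (-(μp - μm)⁻¹) • (L * L - μp • (1 : Matrix (Fin 4) (Fin 4) ℝ))) :
    Pp + Pm = 1 ∧ Pp * Pm = 0 ∧ Pm * Pp = 0 ∧ Pp * Pp = Pp ∧ Pm * Pm = Pm ∧
    Pp * L = L * Pp ∧ Pm * L = L * Pm :=
  projections_of_nonsimple_general g L hg hL μp μm hμp hμm hμppos hμmneg Pp Pm hPp hPm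
end

section
/- Let x, y ∈ ℝ³ with x·y ≠ 0, and set μ± = ½(|x|² − |y|² ± √((|x|²−|y|²)² + 4(x·y)²)), a± = ±(μ± x + (x·y) y)/(μ₊ − μ₋), b± = ±(μ± y − (x·y) x)/(μ₊ − μ₋). Then L_{xy} = L_{a₊b₊} + L_{a₋b₋} and L_{a₊b₊} L_{a₋b₋} = 0 = L_{a₋b₋} L_{a₊b₊}, where L_{uv} denotes the 4×4 matrix [[0, uᵀ],[u, W_v]]. -/
/-!
`Lxy` is linear in the pair `(u, v)`, and `μ₊, μ₋` are the roots of
`μ² - (|x|² - |y|²) μ - (x·y)²`, so `μ₊ + μ₋ = |x|² - |y|²` and `μ₊ μ₋ = -(x·y)²`.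
The first relation gives `a₊ + a₋ = x` and `b₊ + b₋ = y`. For the products, every block of
`L_{αx + (x·y)y, αy - (x·y)x} * L_{βx + (x·y)y, βy - (x·y)x}` is a multiple of
`αβ + (x·y)²` or of `α + β - (|x|² - |y|²)`, which both vanish for `{α, β} = {μ₊, μ₋}`.
-/

open Matrix

/-- The Minkowski Lorentz bivector L_{uv} = [[0, uᵀ],[u, W_v]], with W_v the
cross-product matrix of v. -/
def Lxy (u v : Fin 3 → ℝ) : Matrix (Fin 4) (Fin 4) ℝ :=
  !![0,     u 0,    u 1,    u 2;
     u 0,   0,      -v 2,   v 1;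
     u 1,   v 2,    0,      -v 0;
     u 2,   -v 1,   v 0,    0]

lemma Lxy_add (u v u' v' : Fin 3 → ℝ) : Lxy (u + u') (v + v') = Lxy u v + Lxy u' v' := by
  ext i j
  fin_cases i <;> fin_cases j <;> simp [Lxy] <;> ring

lemma Lxy_smul (t : ℝ) (u v : Fin 3 → ℝ) : Lxy (t • u) (t • v) = t • Lxy u v := by
  ext i j
  fin_cases i <;> fin_cases j <;> simp [Lxy]

/- The blocks of `Lxy u v * Lxy u' v'` are `u ⬝ᵥ u'`, `u ⨯₃ v'`, `v ⨯₃ u'` and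
`u u'ᵀ + v' vᵀ - (v ⬝ᵥ v') • 1`; the corner `u ⬝ᵥ u'` is the trace of `u u'ᵀ + v' vᵀ` minus
`v ⬝ᵥ v'`. -/
lemma Lxy_mul_eq_zero {u v u' v' : Fin 3 → ℝ}
    (houter : ∀ i j, u i * u' j + v' i * v j = 0) (hdot : v ⬝ᵥ v' = 0)
    (hcross : u ⨯₃ v' = 0) (hcross' : v ⨯₃ u' = 0) :
    Lxy u v * Lxy u' v' = 0 := by
  simp only [cross_apply, funext_iff, Pi.zero_apply, Fin.forall_fin_succ, cons_val_zero,
    cons_val_succ, cons_val_fin_one, forall_const] at hcross hcross'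
  obtain ⟨c₀, c₁, c₂⟩ := hcross
  obtain ⟨c₀', c₁', c₂'⟩ := hcross'
  simp only [dotProduct, Fin.sum_univ_three] at hdot
  ext i j
  fin_cases i <;> fin_cases j <;>
    simp [Lxy, Matrix.mul_apply, Fin.sum_univ_four] <;>
    linarith [houter 0 0, houter 0 1, houter 0 2, houter 1 0, houter 1 1, houter 1 2,
      houter 2 0, houter 2 1, houter 2 2, c₀, c₁, c₂, c₀', c₁', c₂']

lemma Lxy_mul_eq_zero_of_vieta (x y : Fin 3 → ℝ) {α β : ℝ}
    (hmul : α * β = -(x ⬝ᵥ y) ^ 2) (hadd : α + β = x ⬝ᵥ x - y ⬝ᵥ y) :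
    Lxy (α • x + (x ⬝ᵥ y) • y) (α • y - (x ⬝ᵥ y) • x) *
      Lxy (β • x + (x ⬝ᵥ y) • y) (β • y - (x ⬝ᵥ y) • x) = 0 := by
  apply Lxy_mul_eq_zero
  · intro i j
    simp only [Pi.add_apply, Pi.sub_apply, Pi.smul_apply, smul_eq_mul]
    linear_combination (x i * x j + y i * y j) * hmul
  · simp only [dotProduct_sub, sub_dotProduct, dotProduct_smul, smul_dotProduct, smul_eq_mul,
      dotProduct_comm y x]
    linear_combination (y ⬝ᵥ y) * hmul - (x ⬝ᵥ y) ^ 2 * hadd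
  · simp only [map_add, map_sub, map_smul, LinearMap.add_apply, LinearMap.smul_apply,
      cross_self, ← cross_anticomm x y]
    linear_combination (norm := module) hmul • (x ⨯₃ y)
  · simp only [map_add, map_sub, map_smul, LinearMap.sub_apply, LinearMap.smul_apply,
      cross_self, ← cross_anticomm x y]
    linear_combination (norm := module) -hmul • (x ⨯₃ y)

theorem minkowski_orthogonal_decomposition (x y : Fin 3 → ℝ) (hxy : x ⬝ᵥ y ≠ 0)
    (μp μm : ℝ)
    (hμp : μp = ((x ⬝ᵥ x - y ⬝ᵥ y) + Real.sqrt ((x ⬝ᵥ x - y ⬝ᵥ y) ^ 2 + 4 * (x ⬝ᵥ y) ^ 2)) / 2)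
    (hμm : μm = ((x ⬝ᵥ x - y ⬝ᵥ y) - Real.sqrt ((x ⬝ᵥ x - y ⬝ᵥ y) ^ 2 + 4 * (x ⬝ᵥ y) ^ 2)) / 2)
    (ap am bp bm : Fin 3 → ℝ)
    (hap : ap = ((μp - μm)⁻¹) • (μp • x + (x ⬝ᵥ y) • y))
    (ham : am = (-(μp - μm)⁻¹) • (μm • x + (x ⬝ᵥ y) • y))
    (hbp : bp = ((μp - μm)⁻¹) • (μp • y - (x ⬝ᵥ y) • x))
    (hbm : bm = (-(μp - μm)⁻¹) • (μm • y - (x ⬝ᵥ y) • x)) :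
    Lxy x y = Lxy ap bp + Lxy am bm ∧
    Lxy ap bp * Lxy am bm = 0 ∧ Lxy am bm * Lxy ap bp = 0 := by
  have hD : 0 < (x ⬝ᵥ x - y ⬝ᵥ y) ^ 2 + 4 * (x ⬝ᵥ y) ^ 2 := by positivity
  have hne : μp - μm ≠ 0 := by
    rw [hμp, hμm, show ∀ p s : ℝ, (p + s) / 2 - (p - s) / 2 = s by intros; ring]
    exact (Real.sqrt_pos.mpr hD).ne'
  have hmul : μp * μm = -(x ⬝ᵥ y) ^ 2 := by
    rw [hμp, hμm]; linear_combination (-1 / 4 : ℝ) * Real.sq_sqrt hD.le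
  have hadd : μp + μm = x ⬝ᵥ x - y ⬝ᵥ y := by rw [hμp, hμm]; ring
  have hLp : Lxy ap bp = (μp - μm)⁻¹ • Lxy (μp • x + (x ⬝ᵥ y) • y) (μp • y - (x ⬝ᵥ y) • x) := by
    rw [hap, hbp, Lxy_smul]
  have hLm : Lxy am bm = -(μp - μm)⁻¹ • Lxy (μm • x + (x ⬝ᵥ y) • y) (μm • y - (x ⬝ᵥ y) • x) := by
    rw [ham, hbm, Lxy_smul]
  refine ⟨?_, ?_, ?_⟩
  · rw [← Lxy_add, hap, ham, hbp, hbm]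
    congr 1
    · linear_combination (norm := module) -(inv_mul_cancel₀ hne) • x
    · linear_combination (norm := module) -(inv_mul_cancel₀ hne) • y
  · rw [hLp, hLm, smul_mul_smul_comm, Lxy_mul_eq_zero_of_vieta x y hmul hadd, smul_zero]
  · rw [hLp, hLm, smul_mul_smul_comm,
      Lxy_mul_eq_zero_of_vieta x y (by rwa [mul_comm]) (by rwa [add_comm]), smul_zero]
end

section
/- Let g be a 4×4 real symmetric matrix with det g < 0 and let L ∈ so(g) be simple, i.e., L³ + (tr₂ L)·L = 0. If tr₂ L < 0, then exp(L) = I + (sinh√(−tr₂ L)/√(−tr₂ L))·L + ((1 − cosh√(−tr₂ L))/(tr₂ L))·L². If tr₂ L > 0, then exp(L) = I + (sin√(tr₂ L)/√(tr₂ L))·L + ((1 − cos√(tr₂ L))/(tr₂ L))·L². If tr₂ L = 0, then exp(L) = I + L + ½L². -/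
open Matrix

/-!
A simple bivector satisfies `L ^ 3 = -(tr₂ L) • L`, so every power of `L` is a scalar multiple of
`L` or `L ^ 2`. Splitting `exp L` into odd and even powers leaves two scalar series, which for
`tr₂ L = -x ^ 2` sum to `sinh x / x` and `(cosh x - 1) / x ^ 2`, and for `tr₂ L = x ^ 2` to
`sin x / x` and `(1 - cos x) / x ^ 2`.
-/

open scoped Nat

section PowersOfCubicElement

variable {𝕜 𝔸 : Type*} [CommSemiring 𝕜] [Semiring 𝔸] [Algebra 𝕜 𝔸] {A : 𝔸} {c : 𝕜}

theorem pow_two_mul_add_one_of_pow_three_eq_smul (h : A ^ 3 = c • A) (k : ℕ) :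
    A ^ (2 * k + 1) = c ^ k • A := by
  induction k with
  | zero => simp
  | succ k ih =>
    rw [show 2 * (k + 1) + 1 = 2 + (2 * k + 1) by ring, pow_add, ih, mul_smul_comm,
      ← pow_succ, h, smul_smul, pow_succ]

theorem pow_two_mul_add_two_of_pow_three_eq_smul (h : A ^ 3 = c • A) (k : ℕ) :
    A ^ (2 * k + 2) = c ^ k • A ^ 2 := by
  rw [show 2 * k + 2 = (2 * k + 1) + 1 by ring, pow_succ,
    pow_two_mul_add_one_of_pow_three_eq_smul h, smul_mul_assoc, ← pow_two]

end PowersOfCubicElement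

namespace NormedSpace

variable {𝕂 𝔸 : Type*} [Field 𝕂] [CharZero 𝕂] [TopologicalSpace 𝕂] [Ring 𝔸] [Algebra 𝕂 𝔸]
  [TopologicalSpace 𝔸] [IsTopologicalRing 𝔸] [ContinuousSMul 𝕂 𝔸] [T2Space 𝔸] {A : 𝔸} {c : 𝕂}

theorem exp_eq_of_pow_three_eq_smul {a b : 𝕂} (h : A ^ 3 = c • A)
    (ha : HasSum (fun k : ℕ => c ^ k / (2 * k + 1)!) a)
    (hb : HasSum (fun k : ℕ => c ^ k / (2 * k + 2)!) b) :
    exp A = 1 + a • A + b • A ^ 2 := by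
  have hodd : HasSum (fun k : ℕ => ((2 * k + 1)! : 𝕂)⁻¹ • A ^ (2 * k + 1)) (a • A) :=
    (ha.smul_const A).congr_fun fun k => by
      rw [pow_two_mul_add_one_of_pow_three_eq_smul h, smul_smul, div_eq_inv_mul]
  have heven : HasSum (fun k : ℕ => ((2 * k)! : 𝕂)⁻¹ • A ^ (2 * k)) (b • A ^ 2 + 1) := by
    refine (hasSum_nat_add_iff' 1).mp ?_
    simpa using (hb.smul_const (A ^ 2)).congr_fun fun k => by
      rw [show 2 * (k + 1) = 2 * k + 2 by ring, pow_two_mul_add_two_of_pow_three_eq_smul h,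
        smul_smul, div_eq_inv_mul]
  rw [congrFun (exp_eq_tsum 𝕂) A,
    (HasSum.even_add_odd (f := fun n ↦ (n ! : 𝕂)⁻¹ • A ^ n) heven hodd).tsum_eq]
  abel

theorem exp_eq_of_pow_three_eq_zero (h : A ^ 3 = 0) : exp A = 1 + A + (2 : 𝕂)⁻¹ • A ^ 2 := by
  have hsingle (n : ℕ) : HasSum (fun k : ℕ => (0 : 𝕂) ^ k / (2 * k + n)!) (n ! : 𝕂)⁻¹ := by
    simpa using hasSum_single (f := fun k : ℕ => (0 : 𝕂) ^ k / (2 * k + n)!) 0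
      fun k hk => by simp [zero_pow hk]
  rw [exp_eq_of_pow_three_eq_smul (c := 0) (by rw [h, zero_smul]) (hsingle 1) (hsingle 2)]
  norm_num

end NormedSpace

namespace Real

variable {x : ℝ}

theorem hasSum_sinh_div (hx : x ≠ 0) :
    HasSum (fun k : ℕ => (x ^ 2) ^ k / (2 * k + 1)!) (sinh x / x) :=
  ((hasSum_sinh x).div_const x).congr_fun fun k => by
    rw [← pow_mul, pow_succ]
    field_simp

theorem hasSum_cosh_sub_one_div (hx : x ≠ 0) :
    HasSum (fun k : ℕ => (x ^ 2) ^ k / (2 * k + 2)!) ((cosh x - 1) / x ^ 2) := by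
  have htail : HasSum (fun k : ℕ => x ^ (2 * (k + 1)) / (2 * (k + 1))!) (cosh x - 1) := by
    simpa using (hasSum_nat_add_iff' 1).mpr (hasSum_cosh x)
  refine (htail.div_const (x ^ 2)).congr_fun fun k => ?_
  rw [← pow_mul, show 2 * (k + 1) = 2 * k + 2 by ring]
  field_simp
  ring

theorem hasSum_sin_div (hx : x ≠ 0) :
    HasSum (fun k : ℕ => (-x ^ 2) ^ k / (2 * k + 1)!) (sin x / x) :=
  ((hasSum_sin x).div_const x).congr_fun fun k => by
    rw [neg_pow, ← pow_mul, pow_succ]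
    field_simp

theorem hasSum_one_sub_cos_div (hx : x ≠ 0) :
    HasSum (fun k : ℕ => (-x ^ 2) ^ k / (2 * k + 2)!) ((1 - cos x) / x ^ 2) := by
  have htail : HasSum (fun k : ℕ => (-1) ^ (k + 1) * x ^ (2 * (k + 1)) / (2 * (k + 1))!)
      (cos x - 1) := by
    simpa using (hasSum_nat_add_iff' 1).mpr (hasSum_cos x)
  rw [← neg_sub, neg_div, ← div_neg]
  refine (htail.div_const (-x ^ 2)).congr_fun fun k => ?_
  rw [neg_pow, ← pow_mul, show 2 * (k + 1) = 2 * k + 2 by ring]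
  field_simp
  ring

end Real

theorem exp_of_simple_bivector_general (L : Matrix (Fin 4) (Fin 4) ℝ)
    (hsimple : L ^ 3 + tr2 L • L = 0) :
    (tr2 L < 0 →
      NormedSpace.exp L = 1
        + (Real.sinh (Real.sqrt (-(tr2 L))) / Real.sqrt (-(tr2 L))) • L
        + ((1 - Real.cosh (Real.sqrt (-(tr2 L)))) / tr2 L) • (L * L)) ∧
    (0 < tr2 L →
      NormedSpace.exp L = 1
        + (Real.sin (Real.sqrt (tr2 L)) / Real.sqrt (tr2 L)) • L
        + ((1 - Real.cos (Real.sqrt (tr2 L))) / tr2 L) • (L * L)) ∧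
    (tr2 L = 0 →
      NormedSpace.exp L = 1 + L + (2 : ℝ)⁻¹ • (L * L)) := by
  have hcube : L ^ 3 = (-tr2 L) • L := by
    rw [neg_smul]
    exact eq_neg_of_add_eq_zero_left hsimple
  refine ⟨fun ht => ?_, fun ht => ?_, fun ht => ?_⟩
  · have hx : √(-tr2 L) ^ 2 = -tr2 L := Real.sq_sqrt (by linarith)
    have hx0 : √(-tr2 L) ≠ 0 := (Real.sqrt_pos.2 (by linarith)).ne'
    rw [← hx] at hcube
    rw [NormedSpace.exp_eq_of_pow_three_eq_smul hcube (Real.hasSum_sinh_div hx0)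
      (Real.hasSum_cosh_sub_one_div hx0), hx, div_neg, ← neg_div, neg_sub, pow_two]
  · have hx : √(tr2 L) ^ 2 = tr2 L := Real.sq_sqrt ht.le
    have hx0 : √(tr2 L) ≠ 0 := (Real.sqrt_pos.2 ht).ne'
    rw [← hx] at hcube
    rw [NormedSpace.exp_eq_of_pow_three_eq_smul hcube (Real.hasSum_sin_div hx0)
      (Real.hasSum_one_sub_cos_div hx0), hx, pow_two]
  · rw [ht, neg_zero, zero_smul] at hcube
    rw [NormedSpace.exp_eq_of_pow_three_eq_zero (𝕂 := ℝ) hcube, pow_two]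

theorem exp_of_simple_bivector (g L : Matrix (Fin 4) (Fin 4) ℝ)
    (hsymm : gᵀ = g) (hg : g.det < 0) (hL : Lᵀ * g + g * L = 0)
    (hsimple : L ^ 3 + tr2 L • L = 0) :
    (tr2 L < 0 →
      NormedSpace.exp L = 1
        + (Real.sinh (Real.sqrt (-(tr2 L))) / Real.sqrt (-(tr2 L))) • L
        + ((1 - Real.cosh (Real.sqrt (-(tr2 L)))) / tr2 L) • (L * L)) ∧
    (0 < tr2 L →
      NormedSpace.exp L = 1
        + (Real.sin (Real.sqrt (tr2 L)) / Real.sqrt (tr2 L)) • L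
        + ((1 - Real.cos (Real.sqrt (tr2 L))) / tr2 L) • (L * L)) ∧
    (tr2 L = 0 →
      NormedSpace.exp L = 1 + L + (2 : ℝ)⁻¹ • (L * L)) :=
  exp_of_simple_bivector_general L hsimple
end

section
/- Let g be a 4×4 real symmetric invertible matrix and Λ a proper Lorentz transformation: Λᵀ g Λ = g and det Λ = 1. Then tr₃ Λ = tr Λ, where tr₃ Λ is the coefficient of t³ in det(I + tΛ). Consequently Λ⁴ − (tr Λ)Λ³ + (tr₂ Λ)Λ² − (tr Λ)Λ + I = 0. -/
/-!
If `Λᵀ g Λ = g` with `g` invertible, then `Λ⁻¹ = g⁻¹ Λᵀ g` has the same trace as `Λ`. Since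
`det Λ = 1`, `det (1 + tΛ) = det (t + Λ⁻¹)` is the characteristic polynomial of `-Λ⁻¹`, so its
`t³`-coefficient is `tr Λ⁻¹ = tr Λ`. The matrix identity is Cayley–Hamilton for `-Λ`, whose
characteristic polynomial is the reversal of `det (1 + tΛ)`; the coefficient `tr₂` is read off from
`det (1 + tΛ) · det (1 - tΛ) = det (1 - t²Λ²)`.
-/

open Matrix Polynomial

/-- The k-th order trace of a 4×4 matrix: the coefficient of t^k in det(I + tM). -/
noncomputable def trk (k : ℕ) (M : Matrix (Fin 4) (Fin 4) ℝ) : ℝ :=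
  ((1 + (X : ℝ[X]) • M.map C).det).coeff k

section
variable {R n : Type*} [CommRing R] [Fintype n] [DecidableEq n]

theorem coeff_det_one_add_X_smul_zero (M : Matrix n n R) :
    (det (1 + (X : R[X]) • M.map C)).coeff 0 = 1 := by
  rw [coeff_zero_eq_eval_zero, eval_det_add_X_smul, det_one, eval_one]

theorem coeff_det_one_add_X_smul_card (M : Matrix n n R) :
    (det (1 + (X : R[X]) • M.map C)).coeff (Fintype.card n) = M.det := by
  rw [coeff_det_one_add_X_smul_eq_sum_minors, ← Finset.card_univ, Finset.powersetCard_self,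
    Finset.sum_singleton]
  exact det_submatrix_equiv_self (Equiv.subtypeUnivEquiv Finset.mem_univ) M

theorem coeff_det_one_add_X_smul_neg (M : Matrix n n R) (k : ℕ) :
    (det (1 + (X : R[X]) • (-M).map C)).coeff k =
      (-1) ^ k * (det (1 + (X : R[X]) • M.map C)).coeff k := by
  rw [coeff_det_one_add_X_smul_eq_sum_minors, coeff_det_one_add_X_smul_eq_sum_minors,
    Finset.mul_sum]
  refine Finset.sum_congr rfl fun s hs => ?_
  rw [← (Finset.mem_powersetCard.1 hs).2, ← Fintype.card_coe, ← det_neg]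
  rfl

theorem det_one_add_X_smul_mul_det_one_add_X_smul_neg (M : Matrix n n R) :
    det (1 + (X : R[X]) • M.map C) * det (1 + (X : R[X]) • (-M).map C) =
      expand R 2 (det (1 + (X : R[X]) • (-(M * M)).map C)) := by
  have hexpand : (expand R 2).mapMatrix (1 + (X : R[X]) • (-(M * M)).map C) =
      1 - (X : R[X]) ^ 2 • (M * M).map C := by
    refine Matrix.ext fun i j => ?_
    simp only [AlgHom.mapMatrix_apply, Matrix.map_apply, Matrix.add_apply, Matrix.sub_apply,
      Matrix.smul_apply, Matrix.neg_apply, one_apply, smul_eq_mul, map_add, map_mul, map_neg,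
      map_one, expand_X, expand_C]
    ring
  have hprod : (1 + (X : R[X]) • M.map C) * (1 + (X : R[X]) • (-M).map C) =
      1 - (X : R[X]) ^ 2 • (M * M).map C := by
    rw [Matrix.map_neg _ (map_neg C), Matrix.map_mul, smul_neg, sq]
    simp only [mul_add, add_mul, mul_neg, smul_mul_smul_comm, one_mul, mul_one]
    abel
  rw [← det_mul, AlgHom.map_det, hexpand, hprod]

theorem two_mul_coeff_two_det_one_add_X_smul (M : Matrix n n R) :
    2 * (det (1 + (X : R[X]) • M.map C)).coeff 2 = trace M ^ 2 - trace (M * M) := by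
  have h := congr_arg (coeff · 2) (det_one_add_X_smul_mul_det_one_add_X_smul_neg M)
  simp only [coeff_mul, Finset.Nat.sum_antidiagonal_succ] at h
  simp [coeff_det_one_add_X_smul_neg, coeff_det_one_add_X_smul_zero,
    coeff_det_one_add_X_smul_one, coeff_expand two_pos] at h
  linear_combination h

theorem det_one_add_X_smul_eq_C_det_mul_charpoly (M : Matrix n n R) (hM : IsUnit M.det) :
    det (1 + (X : R[X]) • M.map C) = C M.det * (-M⁻¹).charpoly := by
  have h : 1 + (X : R[X]) • M.map C = M.map C * charmatrix (-M⁻¹) := by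
    rw [charmatrix, RingHom.mapMatrix_apply, Matrix.map_neg _ (map_neg C), sub_neg_eq_add, mul_add,
      ← Matrix.map_mul, mul_nonsing_inv M hM, Matrix.map_one _ (map_zero C) (map_one C), add_comm,
      smul_eq_mul_diagonal, scalar_apply]
  rw [h, det_mul, charpoly, RingHom.map_det]
  rfl

theorem coeff_det_one_add_X_smul_card_sub_one [Nonempty n] (M : Matrix n n R)
    (hM : IsUnit M.det) :
    (det (1 + (X : R[X]) • M.map C)).coeff (Fintype.card n - 1) = M.det * trace M⁻¹ := by
  rw [det_one_add_X_smul_eq_C_det_mul_charpoly M hM, coeff_C_mul, ← neg_neg (trace M⁻¹),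
    ← trace_neg, trace_eq_neg_charpoly_coeff, neg_neg]

theorem coeff_charpoly_neg (M : Matrix n n R) {k : ℕ} (hk : k ≤ Fintype.card n) :
    (-M).charpoly.coeff (Fintype.card n - k) = (det (1 + (X : R[X]) • M.map C)).coeff k := by
  nontriviality R
  rw [← revAt_le hk, ← charpoly_natDegree_eq_dim (-M), ← coeff_reverse, reverse_charpoly,
    charpolyRev, Matrix.map_neg _ (map_neg C), smul_neg, sub_neg_eq_add]

theorem trace_inv_eq_trace_of_transpose_mul_mul_self_eq {g Λ : Matrix n n R} (hg : IsUnit g.det)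
    (hΛ : Λᵀ * g * Λ = g) : trace Λ⁻¹ = trace Λ := by
  have h : Λ⁻¹ = g⁻¹ * Λᵀ * g := inv_eq_left_inv <| by
    rw [mul_assoc, mul_assoc, ← mul_assoc Λᵀ, hΛ, nonsing_inv_mul g hg]
  rw [h, trace_mul_comm, ← mul_assoc, mul_nonsing_inv g hg, one_mul, trace_transpose]

end

theorem trk_zero (M : Matrix (Fin 4) (Fin 4) ℝ) : trk 0 M = 1 :=
  coeff_det_one_add_X_smul_zero M

theorem trk_one (M : Matrix (Fin 4) (Fin 4) ℝ) : trk 1 M = trace M :=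
  coeff_det_one_add_X_smul_one M

theorem trk_two (M : Matrix (Fin 4) (Fin 4) ℝ) :
    trk 2 M = (trace M ^ 2 - trace (M * M)) / 2 := by
  rw [← two_mul_coeff_two_det_one_add_X_smul, trk, mul_div_cancel_left₀ _ two_ne_zero]

theorem trk_three (M : Matrix (Fin 4) (Fin 4) ℝ) (hM : IsUnit M.det) :
    trk 3 M = M.det * trace M⁻¹ :=
  coeff_det_one_add_X_smul_card_sub_one M hM

theorem trk_four (M : Matrix (Fin 4) (Fin 4) ℝ) : trk 4 M = M.det :=
  coeff_det_one_add_X_smul_card M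

theorem cayley_hamilton_trk (M : Matrix (Fin 4) (Fin 4) ℝ) :
    M ^ 4 - trk 1 M • M ^ 3 + trk 2 M • M ^ 2 - trk 3 M • M + trk 4 M • 1 = 0 := by
  have hcoeff (k : ℕ) (hk : k ≤ 4) : (-M).charpoly.coeff (4 - k) = trk k M :=
    coeff_charpoly_neg M hk
  have h := aeval_self_charpoly (-M)
  rw [aeval_eq_sum_range, charpoly_natDegree_eq_dim, Fintype.card_fin] at h
  simp only [Finset.sum_range_succ, Finset.sum_range_zero] at h
  rw [hcoeff 4 (by norm_num), hcoeff 3 (by norm_num), hcoeff 2 (by norm_num),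
    hcoeff 1 (by norm_num), hcoeff 0 (by norm_num), trk_zero] at h
  norm_num [neg_pow M] at h
  rw [← h]
  abel

theorem lorentz_trace13_general (g Λ : Matrix (Fin 4) (Fin 4) ℝ)
    (hinv : IsUnit g.det)
    (hΛ : Λᵀ * g * Λ = g) (hdet : Λ.det = 1) :
    trk 3 Λ = Matrix.trace Λ ∧
    Λ ^ 4 - Matrix.trace Λ • Λ ^ 3
      + ((Matrix.trace Λ ^ 2 - Matrix.trace (Λ * Λ)) / 2) • Λ ^ 2
      - Matrix.trace Λ • Λ + 1 = 0 := by
  have htrk3 : trk 3 Λ = trace Λ := by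
    rw [trk_three Λ (hdet ▸ isUnit_one), hdet, one_mul,
      trace_inv_eq_trace_of_transpose_mul_mul_self_eq hinv hΛ]
  refine ⟨htrk3, ?_⟩
  have h := cayley_hamilton_trk Λ
  rwa [trk_one, trk_two, htrk3, trk_four, hdet, one_smul] at h

theorem lorentz_trace13 (g Λ : Matrix (Fin 4) (Fin 4) ℝ)
    (hsymm : gᵀ = g) (hinv : IsUnit g.det)
    (hΛ : Λᵀ * g * Λ = g) (hdet : Λ.det = 1) :
    trk 3 Λ = Matrix.trace Λ ∧
    Λ ^ 4 - Matrix.trace Λ • Λ ^ 3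
      + ((Matrix.trace Λ ^ 2 - Matrix.trace (Λ * Λ)) / 2) • Λ ^ 2
      - Matrix.trace Λ • Λ + 1 = 0 :=
  lorentz_trace13_general g Λ hinv hΛ hdet
end

section
/- Let g be a 4×4 real symmetric invertible matrix and Λ a proper Lorentz transformation (Λᵀ g Λ = g, det Λ = 1). Then Λ² + Λ⁻² = −(tr₂ Λ)·I + (tr Λ)·(Λ + Λ⁻¹) and Λ³ + Λ⁻³ = (2 − tr₂ Λ)(tr Λ)·I + (tr(Λ)² − tr₂ Λ − 1)·(Λ + Λ⁻¹). -/
/-!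
Since `Λ⁻¹ = g⁻¹ Λᵀ g` is similar to `Λᵀ`, the matrices `Λ` and `Λ⁻¹` have the same characteristic
polynomial `χ`. On the other hand `χ_{Λ⁻¹}` is the reverse of `χ` because `det Λ = 1` and the
dimension is even, so `χ = X⁴ - t X³ + c X² - t X + 1` with `t = tr Λ` is palindromic. Multiplying
Cayley–Hamilton by `Λ⁻²` gives `Λ² + Λ⁻² = -c + t (Λ + Λ⁻¹)`; its trace identifies `c` with
`tr₂ Λ`, and the cubic identity follows from
`(Λ + Λ⁻¹)(Λ² + Λ⁻²) = Λ³ + Λ⁻³ + Λ + Λ⁻¹` and `(Λ + Λ⁻¹)² = Λ² + Λ⁻² + 2`.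
-/

section InverseSums

variable {R A : Type*} [CommRing R] [Ring A] [Algebra R A] {a b : A}

theorem cube_add_cube_of_sq_add_sq (hab : a * b = 1) (hba : b * a = 1) {t c : R}
    (h : a ^ 2 + b ^ 2 = (-c) • (1 : A) + t • (a + b)) :
    a ^ 3 + b ^ 3 = ((2 - c) * t) • (1 : A) + (t ^ 2 - c - 1) • (a + b) := by
  have hsq : (a + b) * (a + b) = a ^ 2 + b ^ 2 + 2 • (1 : A) := by
    rw [add_mul, mul_add, mul_add, hab, hba, ← sq, ← sq]; abel
  have hcube : (a + b) * (a ^ 2 + b ^ 2) = a ^ 3 + b ^ 3 + (a + b) := by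
    rw [add_mul, mul_add, mul_add, ← pow_succ', ← pow_succ', sq b, ← mul_assoc, hab, one_mul,
      sq a, ← mul_assoc, hba, one_mul]
    abel
  rw [h, mul_add, mul_smul_comm, mul_smul_comm, mul_one, hsq, h] at hcube
  linear_combination (norm := module) -hcube

theorem sq_add_sq_of_palindromic_quartic (hba : b * a = 1) {t c : R}
    (h : 1 - t • a + c • a ^ 2 - t • a ^ 3 + a ^ 4 = 0) :
    a ^ 2 + b ^ 2 = (-c) • (1 : A) + t • (a + b) := by
  have e2 : b ^ 2 * a ^ 2 = 1 := by
    rw [sq, sq, mul_assoc, ← mul_assoc b a a, hba, one_mul, hba]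
  have e1 : b ^ 2 * a = b := by rw [sq, mul_assoc, hba, mul_one]
  have e3 : b ^ 2 * a ^ 3 = a := by rw [pow_succ a 2, ← mul_assoc, e2, one_mul]
  have e4 : b ^ 2 * a ^ 4 = a ^ 2 := by
    rw [show a ^ 4 = a ^ 2 * a ^ 2 by rw [← pow_add], ← mul_assoc, e2, one_mul]
  have hb := congrArg (b ^ 2 * ·) h
  simp only [mul_add, mul_sub, mul_smul_comm, mul_one, mul_zero, e1, e2, e3, e4] at hb
  linear_combination (norm := module) hb

end InverseSums

namespace Matrix

variable {n R : Type*} [Fintype n] [DecidableEq n] [CommRing R]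

theorem charpoly_coeff_one_of_reverse {M : Matrix n n R} (h : M.charpoly.reverse = M.charpoly) :
    M.charpoly.coeff 1 = -trace M := by
  rw [← h, reverse_charpoly, coeff_charpolyRev_eq_neg_trace]

theorem aeval_self_charpoly_of_card_eq_four (h : Fintype.card n = 4) (M : Matrix n n R) :
    M.charpoly.coeff 0 • 1 + M.charpoly.coeff 1 • M + M.charpoly.coeff 2 • M ^ 2
      + M.charpoly.coeff 3 • M ^ 3 + M ^ 4 = 0 := by
  nontriviality R
  have hdeg : M.charpoly.natDegree = 4 := by rw [charpoly_natDegree_eq_dim, h]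
  have hch := aeval_self_charpoly M
  rw [Polynomial.aeval_eq_sum_range' (n := 5) (by rw [hdeg]; norm_num)] at hch
  have hlead : M.charpoly.coeff 4 = 1 := hdeg ▸ M.charpoly_monic.coeff_natDegree
  simpa only [Finset.sum_range_succ, Finset.sum_range_zero, zero_add, pow_zero, pow_one, hlead,
    one_smul] using hch

def PreservesForm (g Λ : Matrix n n R) : Prop := Λᵀ * g * Λ = g

namespace PreservesForm

variable {g Λ : Matrix n n R}

theorem pow (hΛ : PreservesForm g Λ) (k : ℕ) : PreservesForm g (Λ ^ k) := by
  induction k with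
  | zero => simp [PreservesForm]
  | succ k ih =>
    calc (Λ ^ k * Λ)ᵀ * g * (Λ ^ k * Λ) = Λᵀ * ((Λ ^ k)ᵀ * g * Λ ^ k) * Λ := by
          simp only [transpose_mul, mul_assoc]
      _ = g := by rw [ih, hΛ]

theorem inv_eq (hg : IsUnit g.det) (hΛ : PreservesForm g Λ) : Λ⁻¹ = g⁻¹ * Λᵀ * g :=
  inv_eq_left_inv <| by rw [mul_assoc, mul_assoc, ← mul_assoc Λᵀ, hΛ, nonsing_inv_mul g hg]

theorem trace_inv (hg : IsUnit g.det) (hΛ : PreservesForm g Λ) : trace Λ⁻¹ = trace Λ := by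
  rw [hΛ.inv_eq hg, trace_mul_comm, ← mul_assoc, mul_nonsing_inv g hg, one_mul, trace_transpose]

theorem charpoly_inv (hg : IsUnit g.det) (hΛ : PreservesForm g Λ) :
    Λ⁻¹.charpoly = Λ.charpoly := by
  have hu : IsUnit g := (isUnit_iff_isUnit_det g).mpr hg
  rw [hΛ.inv_eq hg, ← hu.unit_spec, charpoly_units_conj', charpoly_transpose]

theorem reverse_charpoly (hg : IsUnit g.det) (hΛ : PreservesForm g Λ)
    (hdet : Λ.det = 1) (hn : Even (Fintype.card n)) : Λ.charpoly.reverse = Λ.charpoly := by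
  have hΛu : IsUnit Λ := (isUnit_iff_isUnit_det Λ).mpr (hdet ▸ isUnit_one)
  rw [Matrix.reverse_charpoly, ← hΛ.charpoly_inv hg, Matrix.charpoly_inv Λ hΛu, hdet,
    Ring.inverse_one, hn.neg_one_pow]
  simp

theorem cayley_hamilton_of_card_eq_four (hg : IsUnit g.det) (hΛ : PreservesForm g Λ)
    (hdet : Λ.det = 1) (hn : Fintype.card n = 4) :
    1 - trace Λ • Λ + Λ.charpoly.coeff 2 • Λ ^ 2 - trace Λ • Λ ^ 3 + Λ ^ 4 = 0 := by
  have : Nonempty n := Fintype.card_pos_iff.mp (by omega)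
  have hc0 : Λ.charpoly.coeff 0 = 1 := by
    have h := det_eq_sign_charpoly_coeff Λ
    rw [hn, hdet] at h
    linear_combination -h
  have hc1 : Λ.charpoly.coeff 1 = -trace Λ :=
    charpoly_coeff_one_of_reverse (hΛ.reverse_charpoly hg hdet (by rw [hn]; decide))
  have hc3 : Λ.charpoly.coeff 3 = -trace Λ := by
    have h := trace_eq_neg_charpoly_coeff Λ
    rw [hn, show 4 - 1 = 3 from rfl] at h
    linear_combination h
  have hch := aeval_self_charpoly_of_card_eq_four hn Λ
  rw [hc0, hc1, hc3] at hch
  linear_combination (norm := module) hch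

theorem sq_add_inv_sq (hg : IsUnit g.det) (hΛ : PreservesForm g Λ)
    (hdet : Λ.det = 1) (hn : Fintype.card n = 4) :
    Λ ^ 2 + Λ⁻¹ ^ 2 = (-Λ.charpoly.coeff 2) • (1 : Matrix n n R) + trace Λ • (Λ + Λ⁻¹) :=
  sq_add_sq_of_palindromic_quartic (nonsing_inv_mul Λ (by simp [hdet]))
    (hΛ.cayley_hamilton_of_card_eq_four hg hdet hn)

end PreservesForm

end Matrix

namespace Matrix.PreservesForm

variable {n K : Type*} [Fintype n] [DecidableEq n] [Field K] [NeZero (2 : K)] {g Λ : Matrix n n K}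

theorem charpoly_coeff_two (hg : IsUnit g.det) (hΛ : PreservesForm g Λ)
    (hdet : Λ.det = 1) (hn : Fintype.card n = 4) :
    Λ.charpoly.coeff 2 = (trace Λ ^ 2 - trace (Λ * Λ)) / 2 := by
  have htr := congrArg trace (hΛ.sq_add_inv_sq hg hdet hn)
  simp only [trace_add, trace_smul, trace_one, hn, smul_eq_mul] at htr
  rw [inv_pow', (hΛ.pow 2).trace_inv hg, hΛ.trace_inv hg, sq Λ] at htr
  rw [eq_div_iff two_ne_zero]
  refine mul_left_cancel₀ (two_ne_zero (α := K)) ?_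
  push_cast at htr
  linear_combination htr

end Matrix.PreservesForm

open Matrix

theorem lorentz_symmetric_powers_general (g Λ : Matrix (Fin 4) (Fin 4) ℝ)
    (hinv : IsUnit g.det)
    (hΛ : Λᵀ * g * Λ = g) (hdet : Λ.det = 1) :
    Λ ^ 2 + Λ⁻¹ ^ 2
      = (-((Matrix.trace Λ ^ 2 - Matrix.trace (Λ * Λ)) / 2)) • (1 : Matrix (Fin 4) (Fin 4) ℝ)
        + Matrix.trace Λ • (Λ + Λ⁻¹) ∧
    Λ ^ 3 + Λ⁻¹ ^ 3
      = ((2 - (Matrix.trace Λ ^ 2 - Matrix.trace (Λ * Λ)) / 2) * Matrix.trace Λ)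
          • (1 : Matrix (Fin 4) (Fin 4) ℝ)
        + (Matrix.trace Λ ^ 2 - (Matrix.trace Λ ^ 2 - Matrix.trace (Λ * Λ)) / 2 - 1)
          • (Λ + Λ⁻¹) := by
  have hΛ' : PreservesForm g Λ := hΛ
  have hcard : Fintype.card (Fin 4) = 4 := Fintype.card_fin 4
  have hsq := hΛ'.sq_add_inv_sq hinv hdet hcard
  rw [hΛ'.charpoly_coeff_two hinv hdet hcard] at hsq
  exact ⟨hsq, cube_add_cube_of_sq_add_sq (mul_nonsing_inv Λ (by simp [hdet]))
    (nonsing_inv_mul Λ (by simp [hdet])) hsq⟩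

theorem lorentz_symmetric_powers (g Λ : Matrix (Fin 4) (Fin 4) ℝ)
    (hsymm : gᵀ = g) (hinv : IsUnit g.det)
    (hΛ : Λᵀ * g * Λ = g) (hdet : Λ.det = 1) :
    Λ ^ 2 + Λ⁻¹ ^ 2
      = (-((Matrix.trace Λ ^ 2 - Matrix.trace (Λ * Λ)) / 2)) • (1 : Matrix (Fin 4) (Fin 4) ℝ)
        + Matrix.trace Λ • (Λ + Λ⁻¹) ∧
    Λ ^ 3 + Λ⁻¹ ^ 3
      = ((2 - (Matrix.trace Λ ^ 2 - Matrix.trace (Λ * Λ)) / 2) * Matrix.trace Λ)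
          • (1 : Matrix (Fin 4) (Fin 4) ℝ)
        + (Matrix.trace Λ ^ 2 - (Matrix.trace Λ ^ 2 - Matrix.trace (Λ * Λ)) / 2 - 1)
          • (Λ + Λ⁻¹) :=
  lorentz_symmetric_powers_general g Λ hinv hΛ hdet
end
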